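/- arXiv:2203.14142 — 2 statements merged into one kernel-verified Lean document; each statement's English description precedes it below -/
import Mathlib

section
/- For any real number $a$ and any $k \geq 0$, the quantity $|(a+ib)^{k+a+ib}|$ (using the principal branch of the complex logarithm) tends to zero as $|b| \to \infty$. -/
/-!
Write `s = a + bi` and `w = k + a + bi`, so that `‖s ^ w‖ = ‖s‖ ^ (k + a) / exp (arg s * b)`.
Since `|sin x| ≤ |x|` and `arg s` has the sign of `b`, we get `arg s * b ≥ b ^ 2 / ‖s‖`, which is
at least `|b| / 2` once `|b| ≥ |a|`. The numerator grows only polynomially in `|b|`, so the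
exponential decay of the denominator wins.
-/

open Complex Filter Real

namespace Complex

theorem abs_im_div_norm_le_abs_arg (z : ℂ) : |z.im| / ‖z‖ ≤ |arg z| := by
  simpa only [sin_arg, abs_div, abs_norm] using abs_sin_le_abs (x := arg z)

theorem arg_mul_im_nonneg (z : ℂ) : 0 ≤ arg z * z.im := by
  rcases le_or_gt 0 z.im with him | him
  · exact mul_nonneg (arg_nonneg_iff.mpr him) him
  · exact mul_nonneg_of_nonpos_of_nonpos (arg_neg_iff.mpr him).le him.le

theorem im_sq_div_norm_le_arg_mul_im (z : ℂ) : z.im ^ 2 / ‖z‖ ≤ arg z * z.im :=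
  calc z.im ^ 2 / ‖z‖ = |z.im| * (|z.im| / ‖z‖) := by rw [← sq_abs]; ring
    _ ≤ |z.im| * |arg z| := mul_le_mul_of_nonneg_left (abs_im_div_norm_le_abs_arg z) (abs_nonneg _)
    _ = |arg z * z.im| := by rw [abs_mul, mul_comm]
    _ = arg z * z.im := abs_of_nonneg (arg_mul_im_nonneg z)

theorem abs_im_div_two_le_arg_mul_im {z : ℂ} (hre : |z.re| ≤ |z.im|) :
    |z.im| / 2 ≤ arg z * z.im := by
  rcases (abs_nonneg z.im).eq_or_lt with him | him
  · rw [← him, zero_div]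
    exact arg_mul_im_nonneg z
  have hnorm : ‖z‖ ≤ 2 * |z.im| := by linarith [norm_le_abs_re_add_abs_im z]
  calc |z.im| / 2 = z.im ^ 2 / (2 * |z.im|) := by rw [← sq_abs]; field_simp
    _ ≤ z.im ^ 2 / ‖z‖ :=
      div_le_div_of_nonneg_left (sq_nonneg _) (him.trans_le (abs_im_le_norm z)) hnorm
    _ ≤ arg z * z.im := im_sq_div_norm_le_arg_mul_im z

theorem norm_cpow_le_of_abs_re_le_abs_im {z w : ℂ} (hre : |z.re| ≤ |z.im|) (him : 1 ≤ |z.im|)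
    (hw : w.im = z.im) : ‖z ^ w‖ ≤ (2 * |z.im|) ^ |w.re| * Real.exp (-(|z.im| / 2)) := by
  have hnorm_ge : 1 ≤ ‖z‖ := him.trans (abs_im_le_norm z)
  have hz : z ≠ 0 := norm_pos_iff.mp (zero_lt_one.trans_le hnorm_ge)
  have hpow : ‖z‖ ^ w.re ≤ (2 * |z.im|) ^ |w.re| :=
    calc ‖z‖ ^ w.re ≤ ‖z‖ ^ |w.re| := rpow_le_rpow_of_exponent_le hnorm_ge (le_abs_self _)
      _ ≤ (2 * |z.im|) ^ |w.re| :=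
        rpow_le_rpow (norm_nonneg z) (by linarith [norm_le_abs_re_add_abs_im z]) (abs_nonneg _)
  have hexp : Real.exp (-(arg z * w.im)) ≤ Real.exp (-(|z.im| / 2)) := by
    rw [Real.exp_le_exp, hw, neg_le_neg_iff]
    exact abs_im_div_two_le_arg_mul_im hre
  rw [norm_cpow_of_ne_zero hz, div_eq_mul_inv, ← Real.exp_neg]
  exact mul_le_mul hpow hexp (Real.exp_pos _).le (by positivity)

end Complex

theorem abs_cpow_tendsto_zero_general (a k : ℝ) :
    Tendsto (fun b : ℝ => ‖((a : ℂ) + b * I) ^ ((k : ℂ) + a + b * I)‖)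
      (comap (fun b : ℝ => |b|) atTop) (nhds 0) := by
  have habs : Tendsto (fun b : ℝ => |b|) (comap (fun b : ℝ => |b|) atTop) atTop := tendsto_comap
  have hbound : Tendsto (fun t : ℝ => (2 * t) ^ |k + a| * Real.exp (-(t / 2))) atTop (nhds 0) := by
    have := (tendsto_rpow_mul_exp_neg_mul_atTop_nhds_zero |k + a| (1 / 4) (by norm_num)).comp
      (tendsto_id.const_mul_atTop two_pos)
    refine this.congr fun t => ?_
    simp only [Function.comp_apply, id]
    ring_nf
  refine squeeze_zero' (Eventually.of_forall fun b => norm_nonneg _) ?_ (hbound.comp habs)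
  filter_upwards [habs.eventually_ge_atTop (max |a| 1)] with b hb
  simpa using norm_cpow_le_of_abs_re_le_abs_im (z := a + b * I) (w := k + a + b * I)
    (by simpa using le_of_max_le_left hb) (by simpa using le_of_max_le_right hb) (by simp)

/-- For any real `a` and any `k ≥ 0`, `|(a+ib)^(k+a+ib)| → 0` as `|b| → ∞`,
using the principal branch of the complex power. -/
theorem abs_cpow_tendsto_zero (a k : ℝ) (hk : 0 ≤ k) :
    Tendsto (fun b : ℝ => ‖((a : ℂ) + b * I) ^ ((k : ℂ) + a + b * I)‖)
      (comap (fun b : ℝ => |b|) atTop) (nhds 0) :=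
  abs_cpow_tendsto_zero_general a k
end

section
/- Let $\{\lambda_j\}$ be a sequence of non-negative reals with $\sum_j(\lambda_j+\xi)^{-\sigma} < \infty$ for all $\sigma > n/2$, $\xi > 0$, and let $\zeta_{\Delta+\xi}(s)$ denote the meromorphic continuation in $s$ of $\sum_j(\lambda_j+\xi)^{-s}$. Then for any fixed real $s \notin -\mathbb{N}$ (away from the poles) and any nonempty open set $U \subset (0,\infty)$, the function $\xi \mapsto \zeta_{\Delta+\xi}(s)$ is not identically zero on $U$. -/
/-!
Binomially expanding `(λⱼ + ξ + δ)^(-t)` around `ξ` and summing over `j` gives, for `Re t` large,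
`Z (ξ + δ) t = ∑ₖ C(-t, k) δᵏ Z ξ (t + k)`. The right-hand side is analytic in `t` away from
the poles, its tail being dominated uniformly on balls, so by the identity theorem the expansion
holds at every non-pole `t`: `ξ ↦ Z ξ s` is a power series around each `ξ₀ > 0`. If it vanished on
an open set, all its coefficients `C(-s, k) Z ξ₀ (s + k)` would vanish. But `C(-s, k) ≠ 0` for
`s ∉ -ℕ`, and for large `k` the value `Z ξ₀ (s + k)` is a convergent series of positive reals.
-/

open Complex Finset Polynomial
open scoped NNReal ENNReal

theorem Ring.choose_eq_inv_factorial_mul_prod {K : Type*} [Field K] [CharZero K] (r : K) (k : ℕ) :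
    Ring.choose r k = (k.factorial : K)⁻¹ * ∏ j ∈ range k, (r - j) := by
  rw [Ring.choose_eq_smul, smul_eq_mul, ← aeval_eq_smeval, aeval_def, ← eval_map,
    descPochhammer_map, descPochhammer_eval_eq_prod_range]

theorem Ring.choose_neg_ne_zero {t : ℂ} (ht : ∀ m : ℕ, t ≠ -m) (k : ℕ) :
    Ring.choose (-t) k ≠ 0 := by
  rw [Ring.choose_eq_inv_factorial_mul_prod]
  refine mul_ne_zero (inv_ne_zero (Nat.cast_ne_zero.mpr k.factorial_ne_zero))
    (prod_ne_zero_iff.mpr fun i _ h => ht i ?_)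
  linear_combination -h

theorem Complex.hasSum_choose_mul_pow {a x : ℂ} (hx : ‖x‖ < 1) :
    HasSum (fun k => Ring.choose a k * x ^ k) ((1 + x) ^ a) := by
  have hx' : x ∈ Metric.eball (0 : ℂ) 1 := by
    rw [Metric.mem_eball, edist_zero_right, ← ofReal_norm]
    exact ENNReal.ofReal_lt_one.mpr hx
  have := Complex.one_add_cpow_hasFPowerSeriesOnBall_zero (a := a) |>.hasSum hx'
  simpa [binomialSeries, FormalMultilinearSeries.ofScalars_apply_eq, mul_comm] using this

theorem Complex.summable_norm_choose_mul_pow (a : ℂ) {q : ℝ} (hq0 : 0 ≤ q) (hq : q < 1) :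
    Summable fun k => ‖Ring.choose a k‖ * q ^ k := by
  have hr : ((Real.toNNReal q : ℝ≥0∞)) < (binomialSeries ℂ a).radius :=
    lt_of_lt_of_le (by simpa using hq) binomialSeries_radius_ge_one
  simpa [binomialSeries, FormalMultilinearSeries.ofScalars_norm, hq0] using
    (binomialSeries ℂ a).summable_norm_mul_pow hr

theorem Complex.norm_choose_neg_le {t : ℂ} {B : ℝ} (ht : ‖t‖ ≤ B) (k : ℕ) :
    ‖Ring.choose (-t) k‖ ≤ ‖Ring.choose (-(B : ℂ)) k‖ := by
  have hB : 0 ≤ B := (norm_nonneg t).trans ht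
  simp only [Ring.choose_eq_inv_factorial_mul_prod, norm_mul, norm_prod]
  gcongr with i
  calc ‖-t - i‖ ≤ ‖t‖ + i := by simpa using norm_sub_le (-t) (i : ℂ)
    _ ≤ B + i := by linarith
    _ = ‖-(B : ℂ) - i‖ := by
      rw [← neg_add', norm_neg, show (B : ℂ) + i = ((B + i : ℝ) : ℂ) by push_cast; rfl,
        norm_real, Real.norm_of_nonneg (by positivity)]

theorem Complex.hasSum_ofReal_add_cpow (u : ℂ) {a δ : ℝ} (ha : 0 < a) (hδ : |δ| < a) :
    HasSum (fun k : ℕ => Ring.choose u k * δ ^ k * (a : ℂ) ^ (u - k)) (((a + δ : ℝ) : ℂ) ^ u) := by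
  have hx : ‖((δ / a : ℝ) : ℂ)‖ < 1 := by
    rwa [norm_real, Real.norm_eq_abs, abs_div, abs_of_pos ha, div_lt_one ha]
  have ha0 : (a : ℂ) ≠ 0 := ofReal_ne_zero.mpr ha.ne'
  have hsplit : ((a + δ : ℝ) : ℂ) ^ u = (a : ℂ) ^ u * (1 + ((δ / a : ℝ) : ℂ)) ^ u := by
    have h1δ : 0 ≤ 1 + δ / a := by
      rw [← div_self ha.ne', ← add_div]
      exact div_nonneg (by linarith [neg_abs_le δ]) ha.le
    rw [← ofReal_one, ← ofReal_add, ← mul_cpow_ofReal_nonneg ha.le h1δ]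
    congr 2
    push_cast
    field_simp
  have hterm : ∀ k : ℕ, (a : ℂ) ^ u * (Ring.choose u k * ((δ / a : ℝ) : ℂ) ^ k)
      = Ring.choose u k * δ ^ k * (a : ℂ) ^ (u - k) := fun k => by
    rw [cpow_sub _ _ ha0, cpow_natCast]
    push_cast
    rw [div_pow]
    field_simp
  simpa only [hsplit, hterm] using (hasSum_choose_mul_pow (a := u) hx).mul_left ((a : ℂ) ^ u)

theorem Complex.norm_ofReal_cpow_neg_le {c x σ : ℝ} (hc : 0 < c) (hx : c ≤ x) {t : ℂ}
    (ht : σ ≤ t.re) : ‖(x : ℂ) ^ (-t)‖ ≤ x ^ (-σ) * c ^ (σ - t.re) := by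
  have hx0 : 0 < x := hc.trans_le hx
  rw [norm_cpow_eq_rpow_re_of_pos hx0, neg_re, show -t.re = -σ + (σ - t.re) by ring,
    Real.rpow_add hx0]
  exact mul_le_mul_of_nonneg_left (Real.rpow_le_rpow_of_nonpos hc hx (by linarith))
    (Real.rpow_nonneg hx0.le _)

section DirichletSeries

variable {a : ℕ → ℝ} {c σ : ℝ}

theorem summable_ofReal_cpow_neg (hc : 0 < c) (ha : ∀ j, c ≤ a j)
    (hσ : Summable fun j => a j ^ (-σ)) {t : ℂ} (ht : σ ≤ t.re) :
    Summable fun j => (a j : ℂ) ^ (-t) :=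
  .of_norm_bounded (hσ.mul_right _) fun j => norm_ofReal_cpow_neg_le hc (ha j) ht

theorem norm_tsum_ofReal_cpow_neg_le (hc : 0 < c) (ha : ∀ j, c ≤ a j)
    (hσ : Summable fun j => a j ^ (-σ)) {t : ℂ} (ht : σ ≤ t.re) :
    ‖∑' j, (a j : ℂ) ^ (-t)‖ ≤ (∑' j, a j ^ (-σ)) * c ^ (σ - t.re) := by
  refine tsum_of_norm_bounded ?_ fun j => norm_ofReal_cpow_neg_le hc (ha j) ht
  exact hσ.hasSum.mul_right _

theorem hasSum_choose_mul_tsum_ofReal_cpow_neg (hc : 0 < c) (ha : ∀ j, c ≤ a j) {t : ℂ}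
    (ht : Summable fun j => a j ^ (-t.re)) {δ : ℝ} (hδ : |δ| < c) :
    HasSum (fun k : ℕ => Ring.choose (-t) k * δ ^ k * ∑' j, (a j : ℂ) ^ (-(t + k)))
      (∑' j, ((a j + δ : ℝ) : ℂ) ^ (-t)) := by
  set G : ℕ × ℕ → ℂ := fun p => Ring.choose (-t) p.1 * δ ^ p.1 * (a p.2 : ℂ) ^ (-(t + p.1))
  have hq : |δ| / c < 1 := (div_lt_one hc).mpr hδ
  have hG : Summable G := by
    refine .of_norm_bounded ((summable_norm_choose_mul_pow (-t) (by positivity) hq).mul_of_nonneg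
      ht (fun _ => by positivity) fun j => (Real.rpow_pos_of_pos (hc.trans_le (ha j)) _).le) ?_
    rintro ⟨k, j⟩
    have hpow := norm_ofReal_cpow_neg_le hc (ha j) (t := t + k) (σ := t.re) (by simp)
    simp only [G, norm_mul, norm_pow, norm_real, Real.norm_eq_abs, add_re, natCast_re,
      sub_add_cancel_left, Real.rpow_neg hc.le, Real.rpow_natCast] at hpow ⊢
    calc ‖Ring.choose (-t) k‖ * |δ| ^ k * ‖(a j : ℂ) ^ (-(t + k))‖
        ≤ ‖Ring.choose (-t) k‖ * |δ| ^ k * (a j ^ (-t.re) * (c ^ k)⁻¹) := by gcongr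
      _ = ‖Ring.choose (-t) k‖ * (|δ| / c) ^ k * a j ^ (-t.re) := by
        rw [div_pow]; field_simp
  have hrows : ∀ k : ℕ, HasSum (fun j => G (k, j))
      (Ring.choose (-t) k * δ ^ k * ∑' j, (a j : ℂ) ^ (-(t + k))) := fun k => by
    simp only [G]
    exact (summable_ofReal_cpow_neg hc ha ht (t := t + k) (by simp)).hasSum.mul_left _
  have hcols : ∀ j : ℕ, HasSum (fun k => G (k, j)) (((a j + δ : ℝ) : ℂ) ^ (-t)) := fun j => by
    simpa only [G, neg_add'] using hasSum_ofReal_add_cpow (-t) (hc.trans_le (ha j))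
      (hδ.trans_le (ha j))
  have hswap : HasSum (fun j => ((a j + δ : ℝ) : ℂ) ^ (-t)) (∑' p, G p) := by
    rw [← (Equiv.prodComm ℕ ℕ).tsum_eq G]
    exact hG.prod_symm.hasSum.prod_fiberwise hcols
  rw [hswap.tsum_eq]
  exact hG.hasSum.prod_fiberwise hrows

end DirichletSeries

theorem isPreconnected_setOf_ne_sub_natCast (z : ℂ) :
    IsPreconnected {t : ℂ | ∀ m : ℕ, t ≠ z - m} := by
  have hrank : 1 < Module.rank ℝ ℂ := by
    rw [Complex.rank_real_complex]
    exact Nat.one_lt_ofNat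
  have h := ((Set.countable_range fun m : ℕ => z - m).isConnected_compl_of_one_lt_rank
    hrank).isPreconnected
  convert h using 1
  ext t
  simp [eq_comm]

theorem analyticAt_tsum_of_tail_bound {f : ℕ → ℂ → ℂ} {z₀ : ℂ} {r : ℝ} (hr : 0 < r) (K : ℕ)
    (hf : ∀ k, AnalyticAt ℂ (f k) z₀)
    (htail : ∀ k, DifferentiableOn ℂ (f (k + K)) (Metric.ball z₀ r))
    {u : ℕ → ℝ} (hu : Summable u) (hle : ∀ k, ∀ z ∈ Metric.ball z₀ r, ‖f (k + K) z‖ ≤ u k) :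
    AnalyticAt ℂ (fun z => ∑' k, f k z) z₀ := by
  have hball : Metric.ball z₀ r ∈ nhds z₀ := Metric.ball_mem_nhds z₀ hr
  have hhead : AnalyticAt ℂ (fun z => ∑ k ∈ range K, f k z) z₀ :=
    Finset.analyticAt_fun_sum _ fun k _ => hf k
  have htail : AnalyticAt ℂ (fun z => ∑' k, f (k + K) z) z₀ :=
    (differentiableOn_tsum_of_summable_norm hu htail Metric.isOpen_ball hle).analyticAt hball
  refine (hhead.add htail).congr ?_
  filter_upwards [hball] with z hz
  have hsum : Summable (f · z) := (summable_nat_add_iff K).1 (.of_norm_bounded hu (hle · z hz))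
  exact hsum.sum_add_tsum_nat_add K

theorem eq_zero_of_forall_hasSum_pow_smul_eq_zero {𝕜 E : Type*} [NontriviallyNormedField 𝕜]
    [NormedAddCommGroup E] [NormedSpace 𝕜 E] {b : ℕ → E} {ε : ℝ} (hε : 0 < ε)
    (h : ∀ y : 𝕜, ‖y‖ < ε → HasSum (fun k => y ^ k • b k) 0) (k : ℕ) : b k = 0 := by
  obtain ⟨y₀, hy₀, hy₀ε⟩ := NormedField.exists_norm_lt 𝕜 hε
  let p : FormalMultilinearSeries 𝕜 𝕜 E := fun k =>
    ContinuousMultilinearMap.mkPiRing 𝕜 (Fin k) (b k)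
  have hp : ∀ (k : ℕ) (y : 𝕜), p k (fun _ => y) = y ^ k • b k := fun k y => by
    simp [p, ContinuousMultilinearMap.mkPiRing_apply]
  have hrad : (‖y₀‖₊ : ℝ≥0∞) ≤ p.radius := by
    refine p.le_radius_of_tendsto (l := 0) ?_
    simpa [p, norm_smul, mul_comm] using (h y₀ hy₀ε).summable.tendsto_atTop_zero.norm
  have hps : HasFPowerSeriesOnBall 0 p 0 ‖y₀‖ₑ := by
    refine ⟨hrad, by simpa using hy₀, fun {y} hy => ?_⟩
    have hy : ‖y‖ < ‖y₀‖ := by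
      simpa [Metric.mem_eball, edist_zero_right, enorm_eq_nnnorm, ← NNReal.coe_lt_coe] using hy
    simpa [hp] using h y (hy.trans hy₀ε)
  simpa [p] using congrArg (fun q : FormalMultilinearSeries 𝕜 𝕜 E => q k fun _ => 1)
    hps.hasFPowerSeriesAt.eq_zero

theorem ne_sub_natCast_of_lt_re {σ₀ : ℝ} {t : ℂ} (ht : σ₀ < t.re) (m : ℕ) : t ≠ σ₀ - m := by
  rintro rfl
  simp only [sub_re, ofReal_re, natCast_re] at ht
  linarith [m.cast_nonneg (α := ℝ)]

/-- `Z` continues in `s` the series `∑ⱼ (λⱼ + ξ)^(-s)`, which converges for `Re s > σ₀`, to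
the complement of the candidate poles `σ₀ - ℕ`. -/
structure IsShiftedZetaContinuation (lam : ℕ → ℝ) (σ₀ : ℝ) (Z : ℝ → ℂ → ℂ) : Prop where
  nonneg : ∀ j, 0 ≤ lam j
  summable : ∀ σ, σ₀ < σ → ∀ ξ, 0 < ξ → Summable fun j => (lam j + ξ) ^ (-σ)
  eq_tsum : ∀ ξ, 0 < ξ → ∀ s : ℂ, σ₀ < s.re → Z ξ s = ∑' j, ((lam j + ξ : ℝ) : ℂ) ^ (-s)
  analyticAt : ∀ ξ, 0 < ξ → ∀ s : ℂ, (∀ m : ℕ, s ≠ σ₀ - m) → AnalyticAt ℂ (Z ξ) s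

/-- The `k`-th term of the expansion of `Z (ξ + δ) t` in powers of `δ`: its coefficient is
`∂ᵏ/∂ξᵏ Z ξ t / k! = (-1)ᵏ t (t+1) ⋯ (t+k-1) Z ξ (t + k) / k!`. -/
noncomputable def taylorTerm (Z : ℝ → ℂ → ℂ) (ξ δ : ℝ) (k : ℕ) (t : ℂ) : ℂ :=
  Ring.choose (-t) k * δ ^ k * Z ξ (t + k)

namespace IsShiftedZetaContinuation

variable {lam : ℕ → ℝ} {σ₀ : ℝ} {Z : ℝ → ℂ → ℂ} {ξ δ : ℝ}

theorem lam_add_pos (hZ : IsShiftedZetaContinuation lam σ₀ Z) (hξ : 0 < ξ) (j : ℕ) :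
    0 < lam j + ξ := by
  linarith [hZ.nonneg j]

theorem analyticAt_of_lt_re (hZ : IsShiftedZetaContinuation lam σ₀ Z) (hξ : 0 < ξ) {t : ℂ}
    (ht : σ₀ < t.re) : AnalyticAt ℂ (Z ξ) t :=
  hZ.analyticAt ξ hξ t (ne_sub_natCast_of_lt_re ht)

theorem ne_zero_of_lt (hZ : IsShiftedZetaContinuation lam σ₀ Z) (hξ : 0 < ξ) {σ : ℝ}
    (hσ : σ₀ < σ) : Z ξ σ ≠ 0 := by
  rw [hZ.eq_tsum ξ hξ σ (by simpa using hσ)]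
  have hterm : ∀ j, ((lam j + ξ : ℝ) : ℂ) ^ (-(σ : ℂ)) = (((lam j + ξ) ^ (-σ) : ℝ) : ℂ) :=
    fun j => by rw [ofReal_cpow (hZ.lam_add_pos hξ j).le, ofReal_neg]
  rw [tsum_congr hterm, ← ofReal_tsum, ofReal_ne_zero]
  exact ((hZ.summable σ hσ ξ hξ).tsum_pos (fun j => (Real.rpow_pos_of_pos
    (hZ.lam_add_pos hξ j) _).le) 0 (Real.rpow_pos_of_pos (hZ.lam_add_pos hξ 0) _)).ne'

theorem norm_taylorTerm_le (hZ : IsShiftedZetaContinuation lam σ₀ Z) (hξ : 0 < ξ) {σ : ℝ}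
    (hσ : σ₀ < σ) {t : ℂ} {B : ℝ} (htB : ‖t‖ ≤ B) {k : ℕ} (hk : σ ≤ t.re + k) :
    ‖taylorTerm Z ξ δ k t‖ ≤ ‖Ring.choose (-(B : ℂ)) k‖ * (|δ| / ξ) ^ k
      * ((∑' j, (lam j + ξ) ^ (-σ)) * ξ ^ (σ - t.re)) := by
  have hre : (t + k).re = t.re + k := by simp
  have hZk : ‖Z ξ (t + k)‖ ≤ (∑' j, (lam j + ξ) ^ (-σ)) * ξ ^ (σ - t.re) * (ξ ^ k)⁻¹ := by
    rw [hZ.eq_tsum ξ hξ _ (by linarith), mul_assoc, ← Real.rpow_natCast, ← Real.rpow_neg hξ.le,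
      ← Real.rpow_add hξ, show σ - t.re + -k = σ - (t + k).re by rw [hre]; ring]
    exact norm_tsum_ofReal_cpow_neg_le hξ (fun j => by linarith [hZ.nonneg j])
      (hZ.summable σ hσ ξ hξ) (by linarith)
  calc ‖taylorTerm Z ξ δ k t‖
      = ‖Ring.choose (-t) k‖ * |δ| ^ k * ‖Z ξ (t + k)‖ := by
        simp [taylorTerm, norm_pow, norm_real, Real.norm_eq_abs]
    _ ≤ ‖Ring.choose (-(B : ℂ)) k‖ * |δ| ^ k
          * ((∑' j, (lam j + ξ) ^ (-σ)) * ξ ^ (σ - t.re) * (ξ ^ k)⁻¹) := by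
        gcongr
        exact norm_choose_neg_le htB k
    _ = _ := by rw [div_pow]; field_simp

theorem analyticAt_taylorTerm {t : ℂ} {k : ℕ} (h : AnalyticAt ℂ (Z ξ) (t + k)) :
    AnalyticAt ℂ (taylorTerm Z ξ δ k) t := by
  have hchoose : AnalyticAt ℂ (fun t : ℂ => Ring.choose (-t) k) t := by
    simp only [Ring.choose_eq_inv_factorial_mul_prod]
    fun_prop
  exact (hchoose.mul analyticAt_const).mul
    (AnalyticAt.comp (g := Z ξ) h (analyticAt_id.add analyticAt_const))

theorem exists_tail_bound (hZ : IsShiftedZetaContinuation lam σ₀ Z) (hξ : 0 < ξ)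
    (hδ : |δ| < ξ) (t₀ : ℂ) :
    ∃ K : ℕ, (∀ k, ∀ t ∈ Metric.ball t₀ 1, σ₀ < (t + (k + K : ℕ)).re) ∧
      ∃ u : ℕ → ℝ, Summable u ∧
        ∀ k, ∀ t ∈ Metric.ball t₀ 1, ‖taylorTerm Z ξ δ (k + K) t‖ ≤ u k := by
  set σ := σ₀ + 1
  obtain ⟨C, hC⟩ := (isCompact_closedBall t₀ 1).exists_bound_of_continuousOn
    (continuous_const.rpow (continuous_const.sub continuous_re)
      fun _ => Or.inl hξ.ne' : Continuous fun t : ℂ => ξ ^ (σ - t.re)).continuousOn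
  obtain ⟨K, hK⟩ := exists_nat_ge (σ - t₀.re + 1)
  have hre : ∀ t ∈ Metric.ball t₀ 1, t₀.re - 1 < t.re := fun t ht => by
    have := (abs_re_le_norm (t - t₀)).trans_lt (mem_ball_iff_norm.mp ht)
    rw [sub_re] at this
    linarith [neg_abs_le (t.re - t₀.re)]
  have hσ : ∀ k, ∀ t ∈ Metric.ball t₀ 1, σ ≤ t.re + (k + K : ℕ) := fun k t ht => by
    push_cast
    linarith [hre t ht, k.cast_nonneg (α := ℝ)]
  refine ⟨K, fun k t ht => by simpa using (by linarith [hσ k t ht] : σ₀ < t.re + (k + K : ℕ)), ?_⟩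
  set S := ∑' j, (lam j + ξ) ^ (-σ)
  have hS : 0 ≤ S := tsum_nonneg fun j => (Real.rpow_pos_of_pos (hZ.lam_add_pos hξ j) _).le
  set q := |δ| / ξ
  refine ⟨fun k => ‖Ring.choose (-((‖t₀‖ + 1 : ℝ) : ℂ)) (k + K)‖ * q ^ (k + K) * (S * C),
    (summable_nat_add_iff K).2 ((summable_norm_choose_mul_pow _ (by positivity)
      ((div_lt_one hξ).mpr hδ)).mul_right _), fun k t ht => ?_⟩
  have htB : ‖t‖ ≤ ‖t₀‖ + 1 := by
    linarith [norm_le_norm_add_norm_sub' t t₀, (mem_ball_iff_norm.mp ht).le]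
  have hCt : ξ ^ (σ - t.re) ≤ C := (le_abs_self _).trans (hC t (Metric.ball_subset_closedBall ht))
  exact (hZ.norm_taylorTerm_le hξ (by linarith) htB (hσ k t ht)).trans
    (mul_le_mul_of_nonneg_left (mul_le_mul_of_nonneg_left hCt hS) (by positivity))

theorem analyticAt_tsum_taylorTerm (hZ : IsShiftedZetaContinuation lam σ₀ Z) (hξ : 0 < ξ)
    (hδ : |δ| < ξ) {t₀ : ℂ} (ht₀ : ∀ m : ℕ, t₀ ≠ σ₀ - m) :
    AnalyticAt ℂ (fun t => ∑' k, taylorTerm Z ξ δ k t) t₀ ∧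
      Summable fun k => taylorTerm Z ξ δ k t₀ := by
  obtain ⟨K, hK, u, hu, hle⟩ := hZ.exists_tail_bound hξ hδ t₀
  have hhead : ∀ k, AnalyticAt ℂ (taylorTerm Z ξ δ k) t₀ := fun k =>
    analyticAt_taylorTerm <| hZ.analyticAt ξ hξ _ fun m h => ht₀ (m + k) <| by
      rw [eq_sub_iff_add_eq.mpr h]
      push_cast
      ring
  have htail : ∀ k, DifferentiableOn ℂ (taylorTerm Z ξ δ (k + K)) (Metric.ball t₀ 1) :=
    fun k t ht => (analyticAt_taylorTerm (hZ.analyticAt_of_lt_re hξ (hK k t ht))).differentiableAt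
      |>.differentiableWithinAt
  exact ⟨analyticAt_tsum_of_tail_bound one_pos K hhead htail hu hle, (summable_nat_add_iff K).1
    (.of_norm_bounded hu fun k => hle k t₀ (Metric.mem_ball_self one_pos))⟩

theorem hasSum_taylorTerm (hZ : IsShiftedZetaContinuation lam σ₀ Z) (hξ : 0 < ξ)
    (hδ : |δ| < ξ) {t : ℂ} (ht : ∀ m : ℕ, t ≠ σ₀ - m) :
    HasSum (fun k => taylorTerm Z ξ δ k t) (Z (ξ + δ) t) := by
  have hξδ : 0 < ξ + δ := by linarith [neg_abs_le δ]
  have hhalf : {u : ℂ | σ₀ < u.re} ∈ nhds ((σ₀ + 1 : ℝ) : ℂ) :=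
    (isOpen_lt continuous_const continuous_re).mem_nhds (by simp)
  have heq : (fun u => ∑' k, taylorTerm Z ξ δ k u) =ᶠ[nhds ((σ₀ + 1 : ℝ) : ℂ)] Z (ξ + δ) := by
    filter_upwards [hhalf] with u hu
    have hexp := hasSum_choose_mul_tsum_ofReal_cpow_neg (a := fun j => lam j + ξ) hξ
      (fun j => le_add_of_nonneg_left (hZ.nonneg j)) (hZ.summable u.re hu ξ hξ) hδ
    simp only [add_assoc] at hexp
    rw [hZ.eq_tsum (ξ + δ) hξδ u hu, ← hexp.tsum_eq]
    refine tsum_congr fun k => ?_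
    have hk : σ₀ < (u + k).re := by simpa using hu.trans_le (le_add_of_nonneg_right k.cast_nonneg)
    rw [taylorTerm, hZ.eq_tsum ξ hξ _ hk]
  have hidentity := AnalyticOnNhd.eqOn_of_preconnected_of_eventuallyEq
    (fun u hu => (hZ.analyticAt_tsum_taylorTerm hξ hδ hu).1)
    (fun u hu => hZ.analyticAt (ξ + δ) hξδ u hu) (isPreconnected_setOf_ne_sub_natCast σ₀)
    (ne_sub_natCast_of_lt_re (by simp)) heq
  exact (hZ.analyticAt_tsum_taylorTerm hξ hδ ht).2.hasSum_iff.2 (hidentity ht)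

end IsShiftedZetaContinuation

/-- For a non-negative sequence `{λⱼ}` with `∑ⱼ (λⱼ+ξ)^(-σ) < ∞` for `σ > n/2`,
`ξ > 0`, let `Z ξ` be the meromorphic continuation in `s` of `∑ⱼ (λⱼ+ξ)^(-s)`.
Then for any fixed real `s ∉ -ℕ` away from the poles `{n/2 - m}` and any nonempty
open set `U ⊆ (0,∞)`, the function `ξ ↦ Z ξ s` is not identically zero on `U`. -/
theorem shifted_zeta_not_identically_zero (n : ℕ) (lam : ℕ → ℝ) (hlam : ∀ j, 0 ≤ lam j)
    (hsum : ∀ σ : ℝ, (n : ℝ) / 2 < σ → ∀ ξ : ℝ, 0 < ξ →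
      Summable fun j => (lam j + ξ) ^ (-σ))
    (Z : ℝ → ℂ → ℂ)
    (hZser : ∀ ξ : ℝ, 0 < ξ → ∀ s : ℂ, (n : ℝ) / 2 < s.re →
      Z ξ s = ∑' j, ((lam j + ξ : ℝ) : ℂ) ^ (-s))
    (hZan : ∀ ξ : ℝ, 0 < ξ → ∀ s : ℂ, (∀ m : ℕ, s ≠ (n : ℂ) / 2 - m) →
      AnalyticAt ℂ (Z ξ) s)
    (s : ℝ) (hs1 : ∀ m : ℕ, s ≠ -(m : ℝ)) (hs2 : ∀ m : ℕ, (s : ℂ) ≠ (n : ℂ) / 2 - m)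
    (U : Set ℝ) (hU : IsOpen U) (hUne : U.Nonempty) (hUsub : U ⊆ Set.Ioi 0) :
    ∃ ξ ∈ U, Z ξ (s : ℂ) ≠ 0 := by
  have hZ : IsShiftedZetaContinuation lam ((n : ℝ) / 2) Z :=
    ⟨hlam, hsum, hZser, fun ξ hξ t ht => hZan ξ hξ t (by push_cast at ht; exact ht)⟩
  by_contra! hvanish
  obtain ⟨ξ₀, hξ₀U⟩ := hUne
  have hξ₀ : 0 < ξ₀ := hUsub hξ₀U
  obtain ⟨ε, hε, hball⟩ := Metric.isOpen_iff.1 hU ξ₀ hξ₀U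
  have hcoeff : ∀ k, Ring.choose (-(s : ℂ)) k * Z ξ₀ (s + k) = 0 := by
    refine eq_zero_of_forall_hasSum_pow_smul_eq_zero (𝕜 := ℝ) (lt_min hε hξ₀) fun δ hδ => ?_
    have hδ' : |δ| < ξ₀ := hδ.trans_le (min_le_right _ _)
    have hterm : (fun k => δ ^ k • (Ring.choose (-(s : ℂ)) k * Z ξ₀ (s + k)))
        = fun k => taylorTerm Z ξ₀ δ k s := by
      funext k
      simp only [taylorTerm, real_smul, ofReal_pow]
      ring
    rw [hterm, ← hvanish (ξ₀ + δ) (hball (by simpa using hδ.trans_le (min_le_left _ _)))]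
    exact hZ.hasSum_taylorTerm hξ₀ hδ' (by push_cast; exact hs2)
  obtain ⟨K, hK⟩ := exists_nat_gt ((n : ℝ) / 2 - s)
  refine mul_ne_zero (Ring.choose_neg_ne_zero (fun m => by exact_mod_cast hs1 m) K) ?_ (hcoeff K)
  exact_mod_cast hZ.ne_zero_of_lt hξ₀ (σ := s + K) (by linarith)
end
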